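/- Let $c\in(0,1/2]$, $\mu\in[-1+c,1-c]^n$, $d\in\mathbb{N}$, and let $f:\{-1,1\}^n\to\{-1,1\}$ be computed by a decision tree of size $s$. Let $g:\{-1,1\}^n\to\{-1,0,1\}$ be computed by the truncated tree in which each internal node at depth $d$ is replaced by a leaf of value $0$. Then $\mathrm{E}_{x\sim\mathcal{D}_\mu}[(f(x)-g(x))^2]=\Pr_{x\sim\mathcal{D}_\mu}[f(x)\ne g(x)]\le(1-c/2)^d\,s$, and consequently $\sum_{S:\,|S|>d}\hat f(S,\mu)^2\le(1-c/2)^d\,s$. -/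

import Mathlib

open scoped Classical

/-- The real value `±1` encoded by a Boolean. -/
noncomputable def pm (b : Bool) : ℝ := if b then 1 else -1

/-- The probability that `x` is drawn from the product distribution `D_μ` on `{-1,1}^n`
(encoded as `Fin n → Bool`), where `E[x i] = μ i`. -/
noncomputable def wt {n : ℕ} (μ : Fin n → ℝ) (x : Fin n → Bool) : ℝ :=
  ∏ i, (1 + pm (x i) * μ i) / 2

/-- Expectation of `F` under the product distribution `D_μ` on `{-1,1}^n`. -/
noncomputable def expD {n : ℕ} (μ : Fin n → ℝ) (F : (Fin n → Bool) → ℝ) : ℝ :=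
  ∑ x : Fin n → Bool, wt μ x * F x

/-- `z_S(x,μ) = ∏_{i∈S} (x i - μ i)/√(1-(μ i)²)`. -/
noncomputable def zS {n : ℕ} (μ : Fin n → ℝ) (S : Finset (Fin n)) (x : Fin n → Bool) : ℝ :=
  ∏ i ∈ S, (pm (x i) - μ i) / Real.sqrt (1 - (μ i) ^ 2)

/-- The normalized Fourier coefficient `f̂(S,μ) = E_{x∼D_μ}[f(x) z_S(x,μ)]`. -/
noncomputable def fourierC {n : ℕ} (μ : Fin n → ℝ) (F : (Fin n → Bool) → ℝ)
    (S : Finset (Fin n)) : ℝ :=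
  expD μ (fun x => F x * zS μ S x)

/-- The partially normalized Fourier coefficient
`f̄(S,μ) = f̂(S,μ) / ∏_{i∈S} √(1-(μ i)²)`. -/
noncomputable def fbar {n : ℕ} (μ : Fin n → ℝ) (F : (Fin n → Bool) → ℝ)
    (S : Finset (Fin n)) : ℝ :=
  fourierC μ F S / ∏ i ∈ S, Real.sqrt (1 - (μ i) ^ 2)

/-- A binary decision tree over `{-1,1}^n` (inputs encoded as `Fin n → Bool`),
with real-valued leaves.  In `node i tfalse ttrue`, the subtree `ttrue` is followed
when `x i` is `true` (i.e. `x i = 1`) and `tfalse` when `x i` is `false` (i.e. `x i = -1`). -/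
inductive DTree (n : ℕ) : Type where
  | leaf : ℝ → DTree n
  | node : Fin n → DTree n → DTree n → DTree n

namespace DTree

/-- The function computed by a decision tree. -/
noncomputable def eval {n : ℕ} : DTree n → (Fin n → Bool) → ℝ
  | leaf v, _ => v
  | node i tfalse ttrue, x => if x i then ttrue.eval x else tfalse.eval x

/-- The size of a decision tree: its number of leaves. -/
def size {n : ℕ} : DTree n → ℕ
  | leaf _ => 1
  | node _ l r => l.size + r.size

/-- The depth of a decision tree: the root has depth 0. -/
def depth {n : ℕ} : DTree n → ℕ
  | leaf _ => 0
  | node _ l r => max l.depth r.depth + 1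

/-- `t.ValidFrom used`: no index of `used` is queried in `t`, and no index is
queried twice on any root-to-leaf path of `t`. -/
def ValidFrom {n : ℕ} : DTree n → Finset (Fin n) → Prop
  | leaf _, _ => True
  | node i l r, used =>
      i ∉ used ∧ l.ValidFrom (insert i used) ∧ r.ValidFrom (insert i used)

/-- A valid decision tree: no index appears twice on any root-to-leaf path. -/
def Valid {n : ℕ} (t : DTree n) : Prop := t.ValidFrom ∅

/-- All leaf values of the tree lie in the set `A`. -/
def LeavesIn {n : ℕ} (A : Set ℝ) : DTree n → Prop
  | leaf v => v ∈ A
  | node _ l r => l.LeavesIn A ∧ r.LeavesIn A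

/-- Truncate a decision tree at depth `d`: every internal node at depth `d`
is replaced by a leaf of value `0`. -/
noncomputable def trunc {n : ℕ} : ℕ → DTree n → DTree n
  | _, leaf v => leaf v
  | 0, node _ _ _ => leaf 0
  | d + 1, node i l r => node i (trunc d l) (trunc d r)

end DTree

/-! Auxiliary -/

noncomputable def wd {n : ℕ} (μ : Fin n → ℝ) (i : Fin n) (b : Bool) : ℝ :=
  (1 + pm b * μ i) / 2

noncomputable def zc {n : ℕ} (μ : Fin n → ℝ) (i : Fin n) (b : Bool) : ℝ :=
  (pm b - μ i) / Real.sqrt (1 - (μ i) ^ 2)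

lemma wt_eq_prod {n : ℕ} (μ : Fin n → ℝ) (x : Fin n → Bool) :
    wt μ x = ∏ i, wd μ i (x i) := rfl

lemma zS_eq_prod {n : ℕ} (μ : Fin n → ℝ) (S : Finset (Fin n)) (x : Fin n → Bool) :
    zS μ S x = ∏ i ∈ S, zc μ i (x i) := rfl

section mu
variable {n : ℕ} {c : ℝ} {μ : Fin n → ℝ}
variable (hc : c ∈ Set.Ioc (0 : ℝ) (1 / 2)) (hμ : ∀ i, μ i ∈ Set.Icc (-1 + c) (1 - c))
include hc hμ

lemma wd_pos (i : Fin n) (b : Bool) : 0 < wd μ i b := by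
  obtain ⟨hc0, hc1⟩ := hc
  obtain ⟨h1, h2⟩ := hμ i
  cases b <;> simp [wd, pm] <;> nlinarith

lemma wd_le (i : Fin n) (b : Bool) : wd μ i b ≤ 1 - c / 2 := by
  obtain ⟨hc0, hc1⟩ := hc
  obtain ⟨h1, h2⟩ := hμ i
  cases b <;> simp [wd, pm] <;> nlinarith

lemma one_sub_sq_pos (i : Fin n) : 0 < 1 - (μ i) ^ 2 := by
  obtain ⟨hc0, hc1⟩ := hc
  obtain ⟨h1, h2⟩ := hμ i
  nlinarith

lemma sigma_pos (i : Fin n) : 0 < Real.sqrt (1 - (μ i) ^ 2) :=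
  Real.sqrt_pos.2 (one_sub_sq_pos hc hμ i)

lemma sigma_sq (i : Fin n) : Real.sqrt (1 - (μ i) ^ 2) ^ 2 = 1 - (μ i) ^ 2 :=
  Real.sq_sqrt (one_sub_sq_pos hc hμ i).le

lemma wt_pos (x : Fin n → Bool) : 0 < wt μ x := by
  rw [wt_eq_prod]; exact Finset.prod_pos fun i _ => wd_pos hc hμ i (x i)

end mu

lemma wd_sum {n : ℕ} (μ : Fin n → ℝ) (i : Fin n) : wd μ i true + wd μ i false = 1 := by
  simp [wd, pm]; ring

lemma sum_wt {n : ℕ} (μ : Fin n → ℝ) : ∑ x : Fin n → Bool, wt μ x = 1 := by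
  have h := Finset.prod_univ_sum (fun _ : Fin n => (Finset.univ : Finset Bool))
    (fun i b => wd μ i b)
  rw [Fintype.piFinset_univ] at h
  have : ∀ i : Fin n, ∑ b : Bool, wd μ i b = 1 := by
    intro i; rw [Fintype.sum_bool]; exact wd_sum μ i
  simp only [wt_eq_prod]
  rw [← h]
  exact Finset.prod_eq_one fun i _ => this i

section expDlemmas
variable {n : ℕ} (μ : Fin n → ℝ)

lemma expD_congr {F G : (Fin n → Bool) → ℝ} (h : ∀ x, F x = G x) :
    expD μ F = expD μ G := by
  unfold expD; exact Finset.sum_congr rfl fun x _ => by rw [h x]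

lemma expD_add (F G : (Fin n → Bool) → ℝ) :
    expD μ (fun x => F x + G x) = expD μ F + expD μ G := by
  unfold expD; rw [← Finset.sum_add_distrib]
  exact Finset.sum_congr rfl fun x _ => by ring

lemma expD_cmul (a : ℝ) (F : (Fin n → Bool) → ℝ) :
    expD μ (fun x => a * F x) = a * expD μ F := by
  unfold expD; rw [Finset.mul_sum]
  exact Finset.sum_congr rfl fun x _ => by ring

lemma expD_sub (F G : (Fin n → Bool) → ℝ) :
    expD μ (fun x => F x - G x) = expD μ F - expD μ G := by
  unfold expD; rw [← Finset.sum_sub_distrib]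
  exact Finset.sum_congr rfl fun x _ => by ring

lemma expD_one : expD μ (fun _ => 1) = 1 := by
  unfold expD; simp only [mul_one]; exact sum_wt μ

end expDlemmas

section split
variable {n : ℕ} {c : ℝ} {μ : Fin n → ℝ}

lemma wt_update (x : Fin n → Bool) (i : Fin n) (b : Bool) :
    wt μ (Function.update x i b) * wd μ i (x i) = wt μ x * wd μ i b := by
  have hfun : (fun j => wd μ j (Function.update x i b j))
      = Function.update (fun j => wd μ j (x j)) i (wd μ i b) := by
    funext j
    rcases eq_or_ne j i with rfl | hj
    · simp
    · simp [Function.update_of_ne hj]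
  rw [wt_eq_prod, wt_eq_prod, hfun,
    Finset.prod_update_of_mem (Finset.mem_univ i)]
  have hx : ∏ j, wd μ j (x j)
      = wd μ i (x i) * ∏ j ∈ Finset.univ \ {i}, wd μ j (x j) := by
    rw [← Finset.prod_update_of_mem (Finset.mem_univ i)]
    apply Finset.prod_congr rfl
    intro j _
    rcases eq_or_ne j i with rfl | hj
    · simp
    · simp [Function.update_of_ne hj]
  rw [hx]; ring

lemma branch_sum (i : Fin n) (b : Bool) (F : (Fin n → Bool) → ℝ) :
    wd μ i b * expD μ (fun x => F (Function.update x i b)) =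
    ∑ x ∈ Finset.univ.filter (fun x : Fin n → Bool => x i = b), wt μ x * F x := by
  unfold expD
  rw [← Finset.sum_filter_add_sum_filter_not Finset.univ (fun x : Fin n → Bool => x i = b)]
  have h1 : ∑ x ∈ Finset.univ.filter (fun x : Fin n → Bool => x i = b),
      wt μ x * F (Function.update x i b)
      = ∑ x ∈ Finset.univ.filter (fun x : Fin n → Bool => x i = b), wt μ x * F x := by
    apply Finset.sum_congr rfl
    intro x hx
    simp only [Finset.mem_filter] at hx
    have : Function.update x i b = x := by
      funext j; rcases eq_or_ne j i with rfl | hj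
      · simp [hx.2]
      · simp [Function.update_of_ne hj]
    rw [this]
  have h2 : ∑ x ∈ Finset.univ.filter (fun x : Fin n → Bool => ¬ x i = b),
      wt μ x * F (Function.update x i b)
      = ∑ x ∈ Finset.univ.filter (fun x : Fin n → Bool => x i = b),
          wt μ (Function.update x i (!b)) * F x := by
    apply Finset.sum_nbij' (fun x => Function.update x i b) (fun x => Function.update x i (!b))
    · intro a ha
      simp only [Finset.mem_filter] at *
      exact ⟨Finset.mem_univ _, by simp⟩
    · intro a ha
      simp only [Finset.mem_filter] at *
      simp
    · intro a ha
      simp only [Finset.mem_filter] at ha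
      funext j; rcases eq_or_ne j i with rfl | hj
      · simp only [Function.update_self]
        cases b <;> simp_all
      · simp [Function.update_of_ne hj]
    · intro a ha
      simp only [Finset.mem_filter] at ha
      funext j; rcases eq_or_ne j i with rfl | hj
      · simp [ha.2]
      · simp [Function.update_of_ne hj]
    · intro a ha
      simp only [Finset.mem_filter] at ha
      have hupd : Function.update (Function.update a i b) i (!b) = a := by
        funext j; rcases eq_or_ne j i with rfl | hj
        · simp only [Function.update_self]
          cases hja : a j <;> cases b <;> simp_all
        · simp [Function.update_of_ne hj]
      rw [hupd]
  rw [h1, h2, ← Finset.sum_add_distrib, Finset.mul_sum]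
  apply Finset.sum_congr rfl
  intro x hx
  simp only [Finset.mem_filter] at hx
  have h3 := wt_update (μ := μ) x i (!b)
  rw [hx.2] at h3
  have hsum : wd μ i b + wd μ i (!b) = 1 := by
    cases b
    · rw [add_comm]; exact wd_sum μ i
    · exact wd_sum μ i
  linear_combination F x * h3 + wt μ x * F x * hsum


lemma expD_split (i : Fin n) (F : (Fin n → Bool) → ℝ) :
    expD μ F = wd μ i true * expD μ (fun x => F (Function.update x i true))
      + wd μ i false * expD μ (fun x => F (Function.update x i false)) := by
  rw [branch_sum i true F, branch_sum i false F]
  show (∑ x : Fin n → Bool, wt μ x * F x) = _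
  rw [← Finset.sum_filter_add_sum_filter_not Finset.univ
    (fun x : Fin n → Bool => x i = true) (fun x => wt μ x * F x)]
  congr 1
  apply Finset.sum_congr _ (fun _ _ => rfl)
  apply Finset.filter_congr; intro x _; simp

end split

namespace DTree
variable {n : ℕ}

@[simp] lemma eval_leaf (v : ℝ) (x : Fin n → Bool) : (leaf v : DTree n).eval x = v := rfl

lemma eval_node (i : Fin n) (l r : DTree n) (x : Fin n → Bool) :
    (node i l r).eval x = if x i then r.eval x else l.eval x := rfl

@[simp] lemma trunc_leaf (d : ℕ) (v : ℝ) : (leaf v : DTree n).trunc d = leaf v := by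
  cases d <;> rfl

@[simp] lemma trunc_zero_node (i : Fin n) (l r : DTree n) :
    (node i l r).trunc 0 = leaf 0 := rfl

@[simp] lemma trunc_succ_node (d : ℕ) (i : Fin n) (l r : DTree n) :
    (node i l r).trunc (d+1) = node i (l.trunc d) (r.trunc d) := rfl

lemma validFrom_mono : ∀ (t : DTree n) (u v : Finset (Fin n)), u ⊆ v →
    t.ValidFrom v → t.ValidFrom u
  | leaf _, _, _, _, _ => trivial
  | node i l r, u, v, huv, ⟨hi, hl, hr⟩ =>
    ⟨fun h => hi (huv h),
     validFrom_mono l _ _ (Finset.insert_subset_insert i huv) hl,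
     validFrom_mono r _ _ (Finset.insert_subset_insert i huv) hr⟩

lemma eval_update : ∀ (t : DTree n) (used : Finset (Fin n)), t.ValidFrom used →
    ∀ j ∈ used, ∀ (x : Fin n → Bool) (b : Bool),
      t.eval (Function.update x j b) = t.eval x
  | leaf v, _, _, _, _, _, _ => rfl
  | node i l r, used, ⟨hi, hl, hr⟩, j, hj, x, b => by
    have hij : i ≠ j := fun h => hi (h ▸ hj)
    have hxj : Function.update x j b i = x i := Function.update_of_ne hij b x
    rw [eval_node, eval_node, hxj]
    rcases hb : x i with _ | _ <;> simp only [hb, if_true, if_false, Bool.false_eq_true]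
    · exact eval_update l _ hl j (Finset.mem_insert_of_mem hj) x b
    · exact eval_update r _ hr j (Finset.mem_insert_of_mem hj) x b

lemma trunc_validFrom : ∀ (d : ℕ) (t : DTree n) (used : Finset (Fin n)),
    t.ValidFrom used → (t.trunc d).ValidFrom used
  | d, leaf _, _, _ => by rw [trunc_leaf]; trivial
  | 0, node _ _ _, _, _ => trivial
  | d + 1, node i l r, used, ⟨hi, hl, hr⟩ =>
    ⟨hi, trunc_validFrom d l _ hl, trunc_validFrom d r _ hr⟩

lemma trunc_eval_or : ∀ (d : ℕ) (t : DTree n) (x : Fin n → Bool),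
    (t.trunc d).eval x = t.eval x ∨ (t.trunc d).eval x = 0
  | d, leaf v, x => by rw [trunc_leaf]; exact Or.inl rfl
  | 0, node _ _ _, _ => Or.inr rfl
  | d + 1, node i l r, x => by
    rw [trunc_succ_node, eval_node, eval_node]
    rcases hb : x i with _ | _ <;> simp only [hb, if_true, if_false, Bool.false_eq_true]
    · exact trunc_eval_or d l x
    · exact trunc_eval_or d r x

lemma eval_mem {A : Set ℝ} : ∀ (t : DTree n), t.LeavesIn A → ∀ x, t.eval x ∈ A
  | leaf v, hv, _ => hv
  | node i l r, ⟨hl, hr⟩, x => by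
    rw [eval_node]
    rcases x i with _ | _ <;> simp only [if_true, if_false, Bool.false_eq_true]
    · exact eval_mem l hl x
    · exact eval_mem r hr x

lemma one_le_size : ∀ t : DTree n, 1 ≤ t.size
  | leaf _ => le_refl 1
  | node _ l r => le_trans (one_le_size l) (Nat.le_add_right _ _)

lemma depth_trunc_le : ∀ (d : ℕ) (t : DTree n), (t.trunc d).depth ≤ d
  | d, leaf v => by rw [trunc_leaf]; exact Nat.zero_le _
  | 0, node _ _ _ => Nat.zero_le _
  | d + 1, node i l r => by
    show max (l.trunc d).depth (r.trunc d).depth + 1 ≤ d + 1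
    exact Nat.succ_le_succ (max_le (depth_trunc_le d l) (depth_trunc_le d r))

end DTree

section prob
variable {n : ℕ} {c : ℝ} {μ : Fin n → ℝ}
variable (hc : c ∈ Set.Ioc (0 : ℝ) (1 / 2)) (hμ : ∀ i, μ i ∈ Set.Icc (-1 + c) (1 - c))
include hc hμ

lemma expD_indic_nonneg (t : DTree n) :
    0 ≤ expD μ (fun x => if t.eval x = 0 then (1:ℝ) else 0) := by
  apply Finset.sum_nonneg
  intro x _
  have := wt_pos hc hμ x
  positivity

lemma prob_zero_le : ∀ (d : ℕ) (t : DTree n) (used : Finset (Fin n)),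
    t.ValidFrom used → t.LeavesIn {-1, 1} →
    expD μ (fun x => if (t.trunc d).eval x = 0 then (1:ℝ) else 0)
      ≤ (1 - c / 2) ^ d * t.size := by
  intro d
  induction d with
  | zero =>
    intro t used hv hlv
    cases t with
    | leaf v =>
      have hv' : v = -1 ∨ v = 1 := by
        simpa [DTree.LeavesIn, Set.mem_insert_iff, Set.mem_singleton_iff] using hlv
      have hv0 : v ≠ 0 := by rcases hv' with rfl | rfl <;> norm_num
      have h0 : expD μ (fun x => if (DTree.trunc 0 (DTree.leaf v)).eval x = 0
          then (1:ℝ) else 0) = expD μ (fun _ => (0:ℝ)) := by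
        apply expD_congr
        intro x
        rw [DTree.trunc_leaf, DTree.eval_leaf]
        simp [hv0]
      rw [h0, show expD μ (fun _ => (0:ℝ)) = 0 by unfold expD; simp]
      positivity
    | node i l r =>
      have h1 : expD μ (fun x => if (DTree.trunc 0 (DTree.node i l r)).eval x = 0
          then (1:ℝ) else 0) = 1 := by
        rw [show (fun x => if (DTree.trunc 0 (DTree.node i l r)).eval x = 0
          then (1:ℝ) else 0) = fun _ => (1:ℝ) from funext fun x => by
            rw [DTree.trunc_zero_node, DTree.eval_leaf]; simp]
        exact expD_one μ
      rw [h1, pow_zero, one_mul]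
      have h2 : 1 ≤ (DTree.node i l r : DTree n).size := DTree.one_le_size _
      exact_mod_cast h2
  | succ d ih =>
    intro t used hv hlv
    cases t with
    | leaf v =>
      have hv' : v = -1 ∨ v = 1 := by
        simpa [DTree.LeavesIn, Set.mem_insert_iff, Set.mem_singleton_iff] using hlv
      have hv0 : v ≠ 0 := by rcases hv' with rfl | rfl <;> norm_num
      have h0 : expD μ (fun x => if (DTree.trunc (d+1) (DTree.leaf v)).eval x = 0
          then (1:ℝ) else 0) = expD μ (fun _ => (0:ℝ)) := by
        apply expD_congr
        intro x
        rw [DTree.trunc_leaf, DTree.eval_leaf]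
        simp [hv0]
      rw [h0, show expD μ (fun _ => (0:ℝ)) = 0 by unfold expD; simp]
      have hc2 : (0:ℝ) ≤ 1 - c/2 := by
        obtain ⟨h1, h2⟩ := hc; linarith
      positivity
    | node i l r =>
      obtain ⟨hi, hl, hr⟩ := hv
      obtain ⟨hll, hlr⟩ := hlv
      set F : (Fin n → Bool) → ℝ :=
        fun x => if (DTree.trunc (d+1) (DTree.node i l r)).eval x = 0 then (1:ℝ) else 0 with hF
      have hsplit := expD_split (μ := μ) i F
      have htrue : (fun x => F (Function.update x i true))
          = fun x => if (DTree.trunc d r).eval x = 0 then (1:ℝ) else 0 := by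
        funext x
        have h1 : (DTree.trunc (d+1) (DTree.node i l r)).eval (Function.update x i true)
            = (DTree.trunc d r).eval x := by
          rw [DTree.trunc_succ_node, DTree.eval_node, Function.update_self]
          simp only [if_true]
          exact DTree.eval_update (DTree.trunc d r) (insert i used)
            (DTree.trunc_validFrom d r _ hr) i (Finset.mem_insert_self i used) x true
        simp only [hF, h1]
      have hfalse : (fun x => F (Function.update x i false))
          = fun x => if (DTree.trunc d l).eval x = 0 then (1:ℝ) else 0 := by
        funext x
        have h1 : (DTree.trunc (d+1) (DTree.node i l r)).eval (Function.update x i false)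
            = (DTree.trunc d l).eval x := by
          rw [DTree.trunc_succ_node, DTree.eval_node, Function.update_self]
          simp only [if_false, Bool.false_eq_true]
          exact DTree.eval_update (DTree.trunc d l) (insert i used)
            (DTree.trunc_validFrom d l _ hl) i (Finset.mem_insert_self i used) x false
        simp only [hF, h1]
      rw [htrue] at hsplit
      rw [hfalse] at hsplit
      have hR := ih r (insert i used) hr hlr
      have hL := ih l (insert i used) hl hll
      have hRnn := expD_indic_nonneg hc hμ (DTree.trunc d r)
      have hLnn := expD_indic_nonneg hc hμ (DTree.trunc d l)
      have hwt := wd_le hc hμ i true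
      have hwf := wd_le hc hμ i false
      have hwtp := (wd_pos hc hμ i true).le
      have hwfp := (wd_pos hc hμ i false).le
      have hc2 : (0:ℝ) ≤ 1 - c/2 := by obtain ⟨h1, h2⟩ := hc; linarith
      have hsz : ((DTree.node i l r : DTree n).size : ℝ) = (l.size : ℝ) + (r.size : ℝ) := by
        show ((l.size + r.size : ℕ) : ℝ) = _
        push_cast; ring
      rw [hsplit, hsz]
      have hpow : (0:ℝ) ≤ (1 - c/2) ^ d := pow_nonneg hc2 d
      calc wd μ i true * expD μ (fun x => if (DTree.trunc d r).eval x = 0 then (1:ℝ) else 0)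
            + wd μ i false * expD μ (fun x => if (DTree.trunc d l).eval x = 0 then (1:ℝ) else 0)
          ≤ (1 - c/2) * ((1 - c/2) ^ d * r.size) + (1 - c/2) * ((1 - c/2) ^ d * l.size) := by
            apply add_le_add
            · exact mul_le_mul hwt hR hRnn hc2
            · exact mul_le_mul hwf hL hLnn hc2
        _ = (1 - c/2) ^ (d+1) * ((l.size : ℝ) + (r.size : ℝ)) := by ring

end prob

section coord
variable {n : ℕ} {c : ℝ} {μ : Fin n → ℝ}
variable (hc : c ∈ Set.Ioc (0 : ℝ) (1 / 2)) (hμ : ∀ i, μ i ∈ Set.Icc (-1 + c) (1 - c))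
include hc hμ

lemma zc_orth (i : Fin n) (b b' : Bool) :
    1 + zc μ i b * zc μ i b' = if b = b' then (wd μ i b)⁻¹ else 0 := by
  have hσ2 := sigma_sq hc hμ i
  have hσ0 := (sigma_pos hc hμ i).ne'
  have h1 : (1 : ℝ) + μ i ≠ 0 := by
    have := (wd_pos hc hμ i true); simp [wd, pm] at this; nlinarith
  have h2 : (1 : ℝ) - μ i ≠ 0 := by
    have := (wd_pos hc hμ i false); simp [wd, pm] at this; nlinarith
  cases b <;> cases b' <;>
    simp only [zc, wd, pm, if_true, if_false, Bool.false_eq_true, Bool.true_eq_false,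
      reduceIte]
  · rw [show (1:ℝ) + -1 * μ i = 1 - μ i by ring]
    field_simp
    linear_combination (-(μ i) - 1) * hσ2
  · field_simp
    linear_combination hσ2
  · field_simp
    linear_combination hσ2
  · rw [show (1:ℝ) + 1 * μ i = 1 + μ i by ring]
    field_simp
    linear_combination ((μ i) - 1) * hσ2

lemma zc_mean (i : Fin n) :
    wd μ i true * zc μ i true + wd μ i false * zc μ i false = 0 := by
  have hσ0 := (sigma_pos hc hμ i).ne'
  simp only [zc, wd, pm, if_true, if_false, Bool.false_eq_true, reduceIte]
  field_simp
  ring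

lemma sum_zS_mul (x y : Fin n → Bool) :
    ∑ S : Finset (Fin n), zS μ S x * zS μ S y
      = if x = y then (wt μ x)⁻¹ else 0 := by
  have hstep : ∀ S : Finset (Fin n), zS μ S x * zS μ S y
      = ∏ i ∈ S, (zc μ i (x i) * zc μ i (y i)) := by
    intro S
    rw [zS_eq_prod, zS_eq_prod, ← Finset.prod_mul_distrib]
  have hsum : ∑ S : Finset (Fin n), zS μ S x * zS μ S y
      = ∏ i, (zc μ i (x i) * zc μ i (y i) + 1) := by
    rw [Finset.prod_add]
    rw [Finset.powerset_univ]
    apply Finset.sum_congr rfl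
    intro S _
    rw [hstep S, Finset.prod_const_one, mul_one]
  rw [hsum]
  by_cases hxy : x = y
  · subst hxy
    simp only [if_true]
    have : ∀ i : Fin n, zc μ i (x i) * zc μ i (x i) + 1 = (wd μ i (x i))⁻¹ := by
      intro i
      have h := zc_orth hc hμ i (x i) (x i)
      simp only [eq_self_iff_true, if_true] at h
      linarith
    rw [Finset.prod_congr rfl (fun i _ => this i), wt_eq_prod, ← Finset.prod_inv_distrib]
  · simp only [hxy, if_false]
    obtain ⟨i, hi⟩ : ∃ i, x i ≠ y i := by
      by_contra h
      push_neg at h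
      exact hxy (funext h)
    apply Finset.prod_eq_zero (Finset.mem_univ i)
    have := zc_orth hc hμ i (x i) (y i)
    rw [if_neg hi] at this
    linarith

lemma sum_fourier_zS (F : (Fin n → Bool) → ℝ) (x : Fin n → Bool) :
    ∑ S : Finset (Fin n), fourierC μ F S * zS μ S x = F x := by
  have h1 : ∀ S : Finset (Fin n), fourierC μ F S * zS μ S x
      = ∑ y : Fin n → Bool, wt μ y * F y * (zS μ S y * zS μ S x) := by
    intro S
    unfold fourierC expD
    rw [Finset.sum_mul]
    exact Finset.sum_congr rfl fun y _ => by ring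
  rw [Finset.sum_congr rfl fun S _ => h1 S, Finset.sum_comm]
  have h2 : ∀ y : Fin n → Bool,
      ∑ S : Finset (Fin n), wt μ y * F y * (zS μ S y * zS μ S x)
      = wt μ y * F y * (if y = x then (wt μ y)⁻¹ else 0) := by
    intro y
    rw [← Finset.mul_sum, sum_zS_mul hc hμ y x]
  rw [Finset.sum_congr rfl fun y _ => h2 y]
  rw [Finset.sum_eq_single x]
  · rw [if_pos rfl, mul_comm (wt μ x) (F x), mul_assoc,
      mul_inv_cancel₀ (wt_pos hc hμ x).ne', mul_one]
  · intro y _ hyx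
    rw [if_neg hyx, mul_zero]
  · intro h
    exact absurd (Finset.mem_univ x) h

lemma parseval_mul (F G : (Fin n → Bool) → ℝ) :
    expD μ (fun x => F x * G x) = ∑ S : Finset (Fin n), fourierC μ F S * fourierC μ G S := by
  unfold expD
  have h1 : ∀ x : Fin n → Bool, wt μ x * (F x * G x)
      = ∑ S : Finset (Fin n), fourierC μ G S * (wt μ x * F x * zS μ S x) := by
    intro x
    conv_lhs => rw [← sum_fourier_zS hc hμ G x]
    rw [Finset.mul_sum, Finset.mul_sum]
    exact Finset.sum_congr rfl fun S _ => by ring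
  rw [Finset.sum_congr rfl fun x _ => h1 x, Finset.sum_comm]
  apply Finset.sum_congr rfl
  intro S _
  rw [← Finset.mul_sum]
  unfold fourierC expD
  rw [mul_comm]
  congr 1
  exact Finset.sum_congr rfl fun x _ => by ring

end coord

namespace DTree
variable {n : ℕ}
@[simp] lemma depth_leaf (v : ℝ) : (leaf v : DTree n).depth = 0 := rfl
@[simp] lemma depth_node (i : Fin n) (l r : DTree n) :
    (node i l r).depth = max l.depth r.depth + 1 := rfl
end DTree

section deg
variable {n : ℕ} {c : ℝ} {μ : Fin n → ℝ}

lemma expD_zS (hc : c ∈ Set.Ioc (0 : ℝ) (1 / 2))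
    (hμ : ∀ i, μ i ∈ Set.Icc (-1 + c) (1 - c))
    {S : Finset (Fin n)} (hS : S.Nonempty) :
    expD μ (fun x => zS μ S x) = 0 := by
  have hpt : ∀ x : Fin n → Bool, wt μ x * zS μ S x
      = ∏ i, (wd μ i (x i) * (if i ∈ S then zc μ i (x i) else 1)) := by
    intro x
    rw [Finset.prod_mul_distrib, ← wt_eq_prod, zS_eq_prod]
    congr 1
    rw [Finset.prod_ite_mem, Finset.univ_inter]
  have hfact : expD μ (fun x => zS μ S x)
      = ∏ i, ∑ b : Bool, (wd μ i b * (if i ∈ S then zc μ i b else 1)) := by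
    unfold expD
    rw [Finset.prod_univ_sum (fun _ : Fin n => (Finset.univ : Finset Bool))
      (fun i b => wd μ i b * (if i ∈ S then zc μ i b else 1))]
    rw [Fintype.piFinset_univ]
    exact Finset.sum_congr rfl fun x _ => hpt x
  rw [hfact]
  obtain ⟨i0, hi0⟩ := hS
  apply Finset.prod_eq_zero (Finset.mem_univ i0)
  rw [Fintype.sum_bool, if_pos hi0, if_pos hi0]
  exact zc_mean hc hμ i0

lemma fourierC_eval_zero (hc : c ∈ Set.Ioc (0 : ℝ) (1 / 2))
    (hμ : ∀ i, μ i ∈ Set.Icc (-1 + c) (1 - c)) :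
    ∀ (t : DTree n) (S : Finset (Fin n)), t.depth < S.card → fourierC μ t.eval S = 0
  | DTree.leaf v, S, hS => by
    have hne : S.Nonempty := Finset.card_pos.mp (by omega)
    have h1 : fourierC μ (DTree.leaf v : DTree n).eval S
        = expD μ (fun x => v * zS μ S x) := rfl
    rw [h1, expD_cmul, expD_zS hc hμ hne, mul_zero]
  | DTree.node i l r, S, hS => by
    rw [DTree.depth_node] at hS
    have hσ0 := (sigma_pos hc hμ i).ne'
    have hzct : zc μ i true = (1 - μ i) / Real.sqrt (1 - μ i ^ 2) := by simp [zc, pm]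
    have hzcf : zc μ i false = (-1 - μ i) / Real.sqrt (1 - μ i ^ 2) := by simp [zc, pm]
    by_cases hi : i ∈ S
    · -- S = insert i (S.erase i)
      set S' := S.erase i with hS'
      have hzSx : ∀ x : Fin n → Bool, zS μ S x = zc μ i (x i) * zS μ S' x := by
        intro x
        rw [zS_eq_prod, zS_eq_prod]
        rw [show S = insert i S' from (Finset.insert_erase hi).symm]
        rw [Finset.prod_insert (Finset.notMem_erase i S)]
      have P2 : ∀ x : Fin n → Bool, (DTree.node i l r).eval x * zS μ S x
          = Real.sqrt (1 - μ i ^ 2) / 2 * ((r.eval x - l.eval x) * zS μ S' x)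
            + (wd μ i false * (r.eval x * zS μ S x)
            + wd μ i true * (l.eval x * zS μ S x)) := by
        intro x
        rw [DTree.eval_node, hzSx x]
        have hσ2 := sigma_sq hc hμ i
        cases hb : x i <;>
          simp only [hb, if_true, if_false, Bool.false_eq_true, hzct, hzcf, wd, pm]
        · field_simp
          linear_combination
            (zS μ S' x * (l.eval x - r.eval x)) * hσ2
        · field_simp
          linear_combination
            (zS μ S' x * (l.eval x - r.eval x)) * hσ2
      have hcard : S.card ≤ n := Finset.card_le_univ S |>.trans (by simp)
      have hcardS' : S'.card = S.card - 1 := Finset.card_erase_of_mem hi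
      have hr' : fourierC μ r.eval S' = 0 :=
        fourierC_eval_zero hc hμ r S' (by omega)
      have hl' : fourierC μ l.eval S' = 0 :=
        fourierC_eval_zero hc hμ l S' (by omega)
      have hr : fourierC μ r.eval S = 0 := fourierC_eval_zero hc hμ r S (by omega)
      have hl : fourierC μ l.eval S = 0 := fourierC_eval_zero hc hμ l S (by omega)
      have : fourierC μ (DTree.node i l r).eval S
          = Real.sqrt (1 - μ i ^ 2) / 2 * (fourierC μ r.eval S' - fourierC μ l.eval S')
            + (wd μ i false * fourierC μ r.eval S + wd μ i true * fourierC μ l.eval S) := by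
        unfold fourierC
        rw [expD_congr μ P2]
        rw [expD_add, expD_cmul, expD_add, expD_cmul, expD_cmul]
        congr 2
        rw [← expD_sub]
        exact expD_congr μ fun x => by ring
      rw [this, hr', hl', hr, hl]
      ring
    · have hzSins : ∀ x : Fin n → Bool, zS μ (insert i S) x = zc μ i (x i) * zS μ S x := by
        intro x
        rw [zS_eq_prod, zS_eq_prod, Finset.prod_insert hi]
      have P1 : ∀ x : Fin n → Bool, (DTree.node i l r).eval x * zS μ S x
          = Real.sqrt (1 - μ i ^ 2) / 2 * ((r.eval x - l.eval x) * zS μ (insert i S) x)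
            + (wd μ i true * (r.eval x * zS μ S x)
            + wd μ i false * (l.eval x * zS μ S x)) := by
        intro x
        rw [DTree.eval_node, hzSins x]
        cases hb : x i <;>
          simp only [hb, if_true, if_false, Bool.false_eq_true, hzct, hzcf, wd, pm]
        · field_simp
          ring
        · field_simp
          ring
      have hcardins : (insert i S).card = S.card + 1 := Finset.card_insert_of_notMem hi
      have hr' : fourierC μ r.eval (insert i S) = 0 :=
        fourierC_eval_zero hc hμ r (insert i S) (by omega)
      have hl' : fourierC μ l.eval (insert i S) = 0 :=
        fourierC_eval_zero hc hμ l (insert i S) (by omega)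
      have hr : fourierC μ r.eval S = 0 := fourierC_eval_zero hc hμ r S (by omega)
      have hl : fourierC μ l.eval S = 0 := fourierC_eval_zero hc hμ l S (by omega)
      have : fourierC μ (DTree.node i l r).eval S
          = Real.sqrt (1 - μ i ^ 2) / 2
              * (fourierC μ r.eval (insert i S) - fourierC μ l.eval (insert i S))
            + (wd μ i true * fourierC μ r.eval S + wd μ i false * fourierC μ l.eval S) := by
        unfold fourierC
        rw [expD_congr μ P1]
        rw [expD_add, expD_cmul, expD_add, expD_cmul, expD_cmul]
        congr 2
        rw [← expD_sub]
        exact expD_congr μ fun x => by ring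
      rw [this, hr', hl', hr, hl]
      ring

end deg

theorem stmt13 (n s : ℕ) (c : ℝ) (hc : c ∈ Set.Ioc (0 : ℝ) (1 / 2))
    (μ : Fin n → ℝ) (hμ : ∀ i, μ i ∈ Set.Icc (-1 + c) (1 - c))
    (d : ℕ)
    (T : DTree n) (hvalid : T.Valid) (hleaves : T.LeavesIn {-1, 1}) (hsize : T.size = s)
    (f g : (Fin n → Bool) → ℝ)
    (hf : ∀ x, f x = T.eval x) (hg : ∀ x, g x = (T.trunc d).eval x) :
    expD μ (fun x => (f x - g x) ^ 2) = expD μ (fun x => if f x ≠ g x then 1 else 0) ∧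
    expD μ (fun x => if f x ≠ g x then 1 else 0) ≤ (1 - c / 2) ^ d * (s : ℝ) ∧
    ∑ S ∈ Finset.univ.filter (fun S : Finset (Fin n) => d < S.card), (fourierC μ f S) ^ 2
      ≤ (1 - c / 2) ^ d * (s : ℝ) := by
  have hfg : ∀ x, g x = f x ∨ g x = 0 := by
    intro x
    rw [hf, hg]
    exact DTree.trunc_eval_or d T x
  have hf1 : ∀ x, f x = -1 ∨ f x = 1 := by
    intro x
    rw [hf]
    simpa [Set.mem_insert_iff, Set.mem_singleton_iff] using DTree.eval_mem T hleaves x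
  have hf0 : ∀ x, f x ≠ 0 := by
    intro x
    rcases hf1 x with h | h <;> rw [h] <;> norm_num
  -- Part 1
  have part1 : expD μ (fun x => (f x - g x) ^ 2)
      = expD μ (fun x => if f x ≠ g x then 1 else 0) := by
    apply expD_congr
    intro x
    rcases hfg x with h | h
    · rw [h]
      simp
    · rw [h]
      rw [if_pos (by rw [h] at *; exact hf0 x)]
      rcases hf1 x with h1 | h1 <;> rw [h1] <;> norm_num
  -- Part 2
  have part2 : expD μ (fun x => if f x ≠ g x then 1 else 0)
      ≤ (1 - c / 2) ^ d * (s : ℝ) := by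
    have heq : expD μ (fun x => if f x ≠ g x then (1:ℝ) else 0)
        = expD μ (fun x => if (T.trunc d).eval x = 0 then (1:ℝ) else 0) := by
      apply expD_congr
      intro x
      rcases hfg x with h | h
      · rw [if_neg (by rw [h]; exact fun hne => hne rfl)]
        rw [if_neg (by rw [← hg, h]; exact hf0 x)]
      · rw [if_pos (by rw [h]; exact hf0 x), if_pos (by rw [← hg, h])]
    rw [heq, ← hsize]
    exact prob_zero_le hc hμ d T ∅ hvalid hleaves
  refine ⟨part1, part2, ?_⟩
  -- Part 3
  have hgdeg : ∀ S : Finset (Fin n), d < S.card → fourierC μ g S = 0 := by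
    intro S hS
    have h1 : fourierC μ g S = fourierC μ (T.trunc d).eval S := by
      unfold fourierC
      exact expD_congr μ fun x => by rw [hg]
    rw [h1]
    exact fourierC_eval_zero hc hμ (T.trunc d) S (lt_of_le_of_lt (DTree.depth_trunc_le d T) hS)
  have hdiff : ∀ S : Finset (Fin n),
      fourierC μ (fun x => f x - g x) S = fourierC μ f S - fourierC μ g S := by
    intro S
    unfold fourierC
    rw [← expD_sub]
    exact expD_congr μ fun x => by ring
  have hparse : expD μ (fun x => (f x - g x) ^ 2)
      = ∑ S : Finset (Fin n), (fourierC μ (fun x => f x - g x) S) ^ 2 := by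
    have h := parseval_mul hc hμ (fun x => f x - g x) (fun x => f x - g x)
    rw [expD_congr μ (fun x => by ring : ∀ x, (f x - g x) ^ 2
      = (fun x => f x - g x) x * (fun x => f x - g x) x), h]
    exact Finset.sum_congr rfl fun S _ => (sq _).symm
  calc ∑ S ∈ Finset.univ.filter (fun S : Finset (Fin n) => d < S.card), (fourierC μ f S) ^ 2
      = ∑ S ∈ Finset.univ.filter (fun S : Finset (Fin n) => d < S.card),
          (fourierC μ (fun x => f x - g x) S) ^ 2 := by
        apply Finset.sum_congr rfl
        intro S hS
        simp only [Finset.mem_filter] at hS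
        rw [hdiff S, hgdeg S hS.2, sub_zero]
    _ ≤ ∑ S : Finset (Fin n), (fourierC μ (fun x => f x - g x) S) ^ 2 :=
        Finset.sum_le_sum_of_subset_of_nonneg (Finset.filter_subset _ _)
          (fun S _ _ => sq_nonneg _)
    _ = expD μ (fun x => (f x - g x) ^ 2) := hparse.symm
    _ = expD μ (fun x => if f x ≠ g x then 1 else 0) := part1
    _ ≤ (1 - c / 2) ^ d * (s : ℝ) := part2
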